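/- arXiv:2004.12956 — 2 statements merged into one kernel-verified Lean document; each statement's English description precedes it below -/
import Mathlib

section
/- Let {x_i} be a Markov chain on a state space 𝒳 satisfying uniform geometric mixing: sup_x ‖P(x_k ∈ · | x_0 = x) − μ(·)‖_TV ≤ κρ^k for all k ≥ 0, where μ is the stationary distribution, κ > 0, ρ ∈ (0,1). Let X : 𝒳 → ℝ^{d×d} (or ℝ^d) be measurable with ‖X(x)‖_F ≤ C_x for all x, and let X̃ = E_μ[X]. For any starting time t₀ and batch size M > 0, define X(ℳ) = (1/M)∑_{i=t₀}^{t₀+M−1} X(x_i). Then E[‖X(ℳ) − X̃‖²] ≤ 8 C_x² [1 + (κ−1)ρ] / ((1−ρ) M). -/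
/-!
Centre the observable: `Y = X - X̃` satisfies `‖Y‖ ≤ 2 C_x`, and the mean squared error of the
batch average is `M⁻² ∑_{i,j} E⟪Y(x_i), Y(x_j)⟫`. For `i < j` the Markov property writes the joint
law of `(x_i, x_j)` as `law(x_i) ⊗ P^{j-i}`, so integrating out `x_j` first replaces `Y(x_j)` by
`∫ Y dP^{j-i}(x_i, ·) = ∫ X dP^{j-i}(x_i, ·) - ∫ X dμ`. Testing against a norming functional and
using the layer-cake formula, mixing bounds the norm of this difference by `2 C_x κ ρ^{j-i}`, hence
`E⟪Y(x_i), Y(x_j)⟫ ≤ 4 C_x² κ ρ^{j-i}`, while the diagonal terms are at most `4 C_x²`. Summing the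
geometric series bounds every row of the double sum by `4 C_x² (1 + 2κρ/(1-ρ))`, and
`(1 - ρ) + 2κρ ≤ 2 (1 + (κ - 1) ρ)`.
-/

open MeasureTheory ProbabilityTheory

/-- `k`-step transition kernel of a time-homogeneous Markov chain. -/
noncomputable def kpow {𝒳 : Type*} [MeasurableSpace 𝒳] (P : Kernel 𝒳 𝒳) : ℕ → Kernel 𝒳 𝒳
  | 0 => Kernel.id
  | n + 1 => (kpow P n).comp P

open Finset
open scoped RealInnerProductSpace

instance kpow.instIsMarkovKernel {𝒳 : Type*} [MeasurableSpace 𝒳] (P : Kernel 𝒳 𝒳)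
    [IsMarkovKernel P] : ∀ k, IsMarkovKernel (kpow P k)
  | 0 => by rw [kpow]; infer_instance
  | n + 1 => by rw [kpow]; have := kpow.instIsMarkovKernel P n; infer_instance

lemma sum_range_pow_sub_le {ρ : ℝ} (hρ₀ : 0 ≤ ρ) (hρ₁ : ρ < 1) (n : ℕ) :
    ∑ i ∈ range n, ρ ^ (n - i) ≤ ρ / (1 - ρ) := by
  have hreflect : ∑ i ∈ range n, ρ ^ (n - i) = ρ * ∑ i ∈ range n, ρ ^ i := by
    rw [← sum_range_reflect, mul_sum]
    refine sum_congr rfl fun i hi => ?_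
    rw [← pow_succ']
    congr 1
    have := mem_range.1 hi
    omega
  calc ∑ i ∈ range n, ρ ^ (n - i) = ρ * ∑ i ∈ Ico 0 n, ρ ^ i := by rw [hreflect, range_eq_Ico]
    _ ≤ ρ * (ρ ^ 0 / (1 - ρ)) := by gcongr; exact geom_sum_Ico_le_of_lt_one hρ₀ hρ₁
    _ = ρ / (1 - ρ) := by ring

lemma sum_range_sum_range_le_of_geometric_decay {T : ℕ → ℕ → ℝ} {D B ρ : ℝ} (hB : 0 ≤ B)
    (hρ₀ : 0 ≤ ρ) (hρ₁ : ρ < 1) (hsymm : ∀ i j, T i j = T j i) (hdiag : ∀ i, T i i ≤ D)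
    (hoff : ∀ i j, i < j → T i j ≤ B * ρ ^ (j - i)) (n : ℕ) :
    ∑ i ∈ range n, ∑ j ∈ range n, T i j ≤ n * (D + 2 * B * (ρ / (1 - ρ))) := by
  induction n with
  | zero => simp
  | succ n ih =>
    have hcol : ∑ i ∈ range n, T i n ≤ B * (ρ / (1 - ρ)) :=
      calc ∑ i ∈ range n, T i n ≤ ∑ i ∈ range n, B * ρ ^ (n - i) :=
            sum_le_sum fun i hi => hoff i n (mem_range.1 hi)
        _ ≤ B * (ρ / (1 - ρ)) := by
            rw [← mul_sum]; exact mul_le_mul_of_nonneg_left (sum_range_pow_sub_le hρ₀ hρ₁ n) hB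
    have hrow : ∑ j ∈ range n, T n j = ∑ i ∈ range n, T i n := sum_congr rfl fun j _ => hsymm n j
    simp only [sum_range_succ, sum_add_distrib, hrow]
    push_cast
    linarith [hdiag n]

section Mixing

variable {𝒳 : Type*} [MeasurableSpace 𝒳] {ν μ : Measure 𝒳} [IsProbabilityMeasure ν]
  [IsProbabilityMeasure μ] {ε : ℝ}

lemma integral_sub_integral_le_of_nonneg_of_le {f : 𝒳 → ℝ} (hf : Measurable f) {C : ℝ}
    (hf₀ : ∀ s, 0 ≤ f s) (hfC : ∀ s, f s ≤ C)
    (h : ∀ A, MeasurableSet A → |(ν A).toReal - (μ A).toReal| ≤ ε) :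
    ∫ s, f s ∂ν - ∫ s, f s ∂μ ≤ C * ε := by
  obtain ⟨s₀⟩ := nonempty_of_isProbabilityMeasure ν
  have hint : ∀ (m : Measure 𝒳) [IsProbabilityMeasure m], Integrable f m := fun m _ =>
    .of_bound hf.aestronglyMeasurable C (.of_forall fun s => by
      rw [Real.norm_of_nonneg (hf₀ s)]; exact hfC s)
  have htail : ∀ (m : Measure 𝒳) [IsProbabilityMeasure m],
      IntegrableOn (fun t => m.real {a | t ≤ f a}) (Set.Ioc 0 C) := by
    intro m _
    have hanti : Antitone fun t => m.real {a | t ≤ f a} := fun _ _ hst =>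
      measureReal_mono fun _ h => hst.trans h
    exact .of_bound measure_Ioc_lt_top hanti.measurable.aestronglyMeasurable 1
      (.of_forall fun t => by rw [Real.norm_of_nonneg measureReal_nonneg]; exact measureReal_le_one)
  rw [(hint ν).integral_eq_integral_Ioc_meas_le (.of_forall hf₀) (.of_forall hfC),
    (hint μ).integral_eq_integral_Ioc_meas_le (.of_forall hf₀) (.of_forall hfC),
    ← integral_sub (htail ν) (htail μ)]
  calc ∫ t in Set.Ioc 0 C, (ν.real {a | t ≤ f a} - μ.real {a | t ≤ f a})
      ≤ ∫ _ in Set.Ioc 0 C, ε :=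
        setIntegral_mono ((htail ν).sub (htail μ)) (integrableOn_const measure_Ioc_lt_top.ne)
          fun t => (le_abs_self _).trans (h _ (measurableSet_le measurable_const hf))
    _ = C * ε := by
        rw [setIntegral_const, Real.volume_real_Ioc_of_le ((hf₀ s₀).trans (hfC s₀)), sub_zero,
          smul_eq_mul]

lemma integral_sub_integral_le_of_abs_le {g : 𝒳 → ℝ} (hg : Measurable g) {C : ℝ}
    (hgC : ∀ s, |g s| ≤ C) (h : ∀ A, MeasurableSet A → |(ν A).toReal - (μ A).toReal| ≤ ε) :
    ∫ s, g s ∂ν - ∫ s, g s ∂μ ≤ 2 * C * ε := by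
  have hint : ∀ (m : Measure 𝒳) [IsProbabilityMeasure m], Integrable g m := fun m _ =>
    .of_bound hg.aestronglyMeasurable C (.of_forall hgC)
  have hshift : ∀ (m : Measure 𝒳) [IsProbabilityMeasure m],
      ∫ s, (g s + C) ∂m = ∫ s, g s ∂m + C := fun m _ => by
    rw [integral_add (hint m) (integrable_const C), integral_const, probReal_univ, one_smul]
  have := integral_sub_integral_le_of_nonneg_of_le (C := 2 * C) (hg.add_const C)
    (fun s => neg_le_iff_add_nonneg.1 (abs_le.1 (hgC s)).1)
    (fun s => by linarith [(abs_le.1 (hgC s)).2]) h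
  rw [hshift ν, hshift μ] at this
  linarith

variable {E : Type*} [NormedAddCommGroup E] [NormedSpace ℝ E] [CompleteSpace E]

lemma norm_integral_sub_integral_le {X : 𝒳 → E} (hX : StronglyMeasurable X) {C : ℝ}
    (hXC : ∀ s, ‖X s‖ ≤ C) (h : ∀ A, MeasurableSet A → |(ν A).toReal - (μ A).toReal| ≤ ε) :
    ‖∫ s, X s ∂ν - ∫ s, X s ∂μ‖ ≤ 2 * C * ε := by
  have hint : ∀ (m : Measure 𝒳) [IsProbabilityMeasure m], Integrable X m := fun m _ =>
    .of_bound hX.aestronglyMeasurable C (.of_forall hXC)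
  obtain ⟨ℓ, hℓ, hℓv⟩ := exists_dual_vector'' ℝ (∫ s, X s ∂ν - ∫ s, X s ∂μ)
  rw [RCLike.ofReal_real_eq_id, id] at hℓv
  rw [← hℓv, map_sub, ← ℓ.integral_comp_comm (hint ν), ← ℓ.integral_comp_comm (hint μ)]
  refine integral_sub_integral_le_of_abs_le
    (ℓ.continuous.comp_stronglyMeasurable hX).measurable (fun s => ?_) h
  calc |ℓ (X s)| ≤ ‖ℓ‖ * ‖X s‖ := ℓ.le_opNorm (X s)
    _ ≤ 1 * C := mul_le_mul hℓ (hXC s) (norm_nonneg _) zero_le_one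
    _ = C := one_mul C

end Mixing

lemma norm_sub_integral_le {𝒳 E : Type*} [MeasurableSpace 𝒳] [NormedAddCommGroup E]
    [NormedSpace ℝ E] {μ : Measure 𝒳} [IsProbabilityMeasure μ] {X : 𝒳 → E} {C : ℝ}
    (hXC : ∀ s, ‖X s‖ ≤ C) (s : 𝒳) : ‖X s - ∫ s, X s ∂μ‖ ≤ 2 * C := by
  have hXμ : ‖∫ s, X s ∂μ‖ ≤ C := by
    simpa using norm_integral_le_of_norm_le_const (μ := μ) (.of_forall hXC)
  linarith [norm_sub_le (X s) (∫ s, X s ∂μ), hXC s]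

lemma map_prodMk_eq_compProd {Ω 𝒳 𝒴 : Type*} [MeasurableSpace Ω] [MeasurableSpace 𝒳]
    [MeasurableSpace 𝒴] {Pr : Measure Ω} [IsFiniteMeasure Pr] {Y : Ω → 𝒳} {Z : Ω → 𝒴}
    (hY : Measurable Y) (hZ : Measurable Z) {K : Kernel 𝒳 𝒴} [IsSFiniteKernel K]
    (h : ∀ A B, MeasurableSet A → MeasurableSet B →
      Pr {ω | Y ω ∈ A ∧ Z ω ∈ B} = ∫⁻ s in A, K s B ∂(Pr.map Y)) :
    Pr.map (fun ω => (Y ω, Z ω)) = Pr.map Y ⊗ₘ K :=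
  Measure.ext_prod fun hA hB => by
    rw [Measure.map_apply (hY.prodMk hZ) (hA.prod hB), Measure.compProd_apply_prod hA hB]
    exact h _ _ hA hB

section InnerProduct

variable {Ω 𝒳 : Type*} [MeasurableSpace Ω] [MeasurableSpace 𝒳]
  {F : Type*} [NormedAddCommGroup F] [InnerProductSpace ℝ F]

lemma integral_le_of_forall_norm_le {Pr : Measure Ω} [IsProbabilityMeasure Pr] {g : Ω → ℝ}
    {C : ℝ} (hgC : ∀ ω, ‖g ω‖ ≤ C) : ∫ ω, g ω ∂Pr ≤ C := by
  simpa using (le_abs_self _).trans (norm_integral_le_of_norm_le_const (μ := Pr) (.of_forall hgC))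

lemma norm_inner_le_of_norm_le {u v : F} {C D : ℝ} (hC : 0 ≤ C) (hu : ‖u‖ ≤ C) (hv : ‖v‖ ≤ D) :
    ‖⟪u, v⟫‖ ≤ C * D :=
  (norm_inner_le_norm u v).trans (mul_le_mul hu hv (norm_nonneg v) hC)

lemma integrable_inner_of_norm_le {Pr : Measure Ω} [IsFiniteMeasure Pr] {f g : Ω → F}
    (hf : AEStronglyMeasurable f Pr) (hg : AEStronglyMeasurable g Pr) {C : ℝ} (hC : 0 ≤ C)
    (hfC : ∀ ω, ‖f ω‖ ≤ C) (hgC : ∀ ω, ‖g ω‖ ≤ C) : Integrable (fun ω => ⟪f ω, g ω⟫) Pr :=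
  .of_bound (hf.inner hg) (C * C) (.of_forall fun ω => norm_inner_le_of_norm_le hC (hfC ω) (hgC ω))

lemma integral_inner_compProd_le {ν : Measure 𝒳} [IsProbabilityMeasure ν] {K : Kernel 𝒳 𝒳}
    [IsFiniteKernel K] [CompleteSpace F] {Y : 𝒳 → F} (hY : StronglyMeasurable Y) {C δ : ℝ}
    (hC : 0 ≤ C) (hYC : ∀ s, ‖Y s‖ ≤ C) (hKY : ∀ s, ‖∫ b, Y b ∂(K s)‖ ≤ δ) :
    ∫ p, ⟪Y p.1, Y p.2⟫ ∂(ν ⊗ₘ K) ≤ C * δ := by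
  have hint : Integrable (fun p : 𝒳 × 𝒳 => ⟪Y p.1, Y p.2⟫) (ν ⊗ₘ K) :=
    integrable_inner_of_norm_le (hY.comp_measurable measurable_fst).aestronglyMeasurable
      (hY.comp_measurable measurable_snd).aestronglyMeasurable hC (hYC ·.1) (hYC ·.2)
  have hfiber : ∀ s, ‖∫ b, ⟪Y s, Y b⟫ ∂(K s)‖ ≤ C * δ := fun s => by
    rw [integral_inner (.of_bound hY.aestronglyMeasurable C (.of_forall hYC))]
    exact norm_inner_le_of_norm_le hC (hYC s) (hKY s)
  rw [Measure.integral_compProd hint]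
  exact integral_le_of_forall_norm_le hfiber

lemma integral_norm_sum_sq {ι : Type*} {Pr : Measure Ω} (s : Finset ι) {f : ι → Ω → F}
    (hf : ∀ i j, Integrable (fun ω => ⟪f i ω, f j ω⟫) Pr) :
    ∫ ω, ‖∑ i ∈ s, f i ω‖ ^ 2 ∂Pr = ∑ i ∈ s, ∑ j ∈ s, ∫ ω, ⟪f i ω, f j ω⟫ ∂Pr := by
  simp_rw [← real_inner_self_eq_norm_sq, sum_inner, inner_sum]
  rw [integral_finsetSum _ fun i _ => integrable_finsetSum _ fun j _ => hf i j]
  exact sum_congr rfl fun i _ => integral_finsetSum _ fun j _ => hf i j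

lemma inv_smul_sum_range_sub {n : ℕ} (hn : n ≠ 0) (f : ℕ → F) (c : F) :
    (n : ℝ)⁻¹ • ∑ i ∈ range n, f i - c = (n : ℝ)⁻¹ • ∑ i ∈ range n, (f i - c) := by
  rw [sum_sub_distrib, smul_sub, sum_const, card_range, ← Nat.cast_smul_eq_nsmul ℝ, smul_smul,
    inv_mul_cancel₀ (Nat.cast_ne_zero.2 hn), one_smul]

lemma integral_norm_average_sub_sq {Pr : Measure Ω} {n : ℕ} (hn : n ≠ 0) {f : ℕ → Ω → F} (c : F)
    (hf : ∀ i j, Integrable (fun ω => ⟪f i ω - c, f j ω - c⟫) Pr) :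
    ∫ ω, ‖(n : ℝ)⁻¹ • ∑ i ∈ range n, f i ω - c‖ ^ 2 ∂Pr =
      (n : ℝ)⁻¹ ^ 2 * ∑ i ∈ range n, ∑ j ∈ range n, ∫ ω, ⟪f i ω - c, f j ω - c⟫ ∂Pr := by
  simp_rw [inv_smul_sum_range_sub hn, norm_smul, mul_pow, Real.norm_eq_abs, sq_abs]
  rw [integral_const_mul, integral_norm_sum_sq _ hf]

lemma integral_inner_sub_integral_le_of_mixing [CompleteSpace F] {P : Kernel 𝒳 𝒳}
    [IsMarkovKernel P] {μ : Measure 𝒳} [IsProbabilityMeasure μ] {β : ℕ → ℝ}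
    (hmix : ∀ s k A, MeasurableSet A → |((kpow P k s) A).toReal - (μ A).toReal| ≤ β k)
    {X : 𝒳 → F} (hX : StronglyMeasurable X) {C : ℝ} (hC : 0 ≤ C) (hXC : ∀ s, ‖X s‖ ≤ C)
    {Pr : Measure Ω} [IsProbabilityMeasure Pr] {x : ℕ → Ω → 𝒳} (hx : ∀ i, Measurable (x i))
    (hMarkov : ∀ i k A B, MeasurableSet A → MeasurableSet B →
      Pr {ω | x i ω ∈ A ∧ x (i + k) ω ∈ B} = ∫⁻ s in A, (kpow P k s) B ∂(Pr.map (x i)))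
    {i j : ℕ} (hij : i ≤ j) :
    ∫ ω, ⟪X (x i ω) - ∫ s, X s ∂μ, X (x j ω) - ∫ s, X s ∂μ⟫ ∂Pr ≤
      2 * C * (2 * C * β (j - i)) := by
  obtain ⟨k, rfl⟩ := Nat.exists_eq_add_of_le hij
  rw [Nat.add_sub_cancel_left]
  set Y := fun s => X s - ∫ s, X s ∂μ
  have hY : StronglyMeasurable Y := hX.sub stronglyMeasurable_const
  have := Measure.isProbabilityMeasure_map (μ := Pr) (hx i).aemeasurable
  have hpair : Measurable fun ω => (x i ω, x (i + k) ω) := (hx i).prodMk (hx (i + k))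
  have hfiber : ∀ s, ‖∫ b, Y b ∂(kpow P k s)‖ ≤ 2 * C * β k := fun s => by
    rw [integral_sub (.of_bound hX.aestronglyMeasurable C (.of_forall hXC)) (integrable_const _),
      integral_const, probReal_univ, one_smul]
    exact norm_integral_sub_integral_le hX hXC (hmix s k)
  calc ∫ ω, ⟪Y (x i ω), Y (x (i + k) ω)⟫ ∂Pr
      = ∫ p, ⟪Y p.1, Y p.2⟫ ∂(Pr.map fun ω => (x i ω, x (i + k) ω)) :=
        (integral_map (f := fun p : 𝒳 × 𝒳 => ⟪Y p.1, Y p.2⟫) hpair.aemeasurable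
          ((hY.comp_measurable measurable_fst).inner
            (hY.comp_measurable measurable_snd)).aestronglyMeasurable).symm
    _ ≤ 2 * C * (2 * C * β k) := by
        rw [map_prodMk_eq_compProd (hx i) (hx (i + k)) (hMarkov i k)]
        exact integral_inner_compProd_le hY (by positivity) (norm_sub_integral_le hXC) hfiber

end InnerProduct

theorem markov_minibatch_variance_general {𝒳 : Type*} [MeasurableSpace 𝒳] {d : ℕ}
    (P : Kernel 𝒳 𝒳) [IsMarkovKernel P] (μ : Measure 𝒳) [IsProbabilityMeasure μ]
    (κ ρ : ℝ) (hκ : 0 < κ) (hρ : ρ ∈ Set.Ioo (0 : ℝ) 1)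
    (hmix : ∀ (x : 𝒳) (k : ℕ) (A : Set 𝒳), MeasurableSet A →
      |((kpow P k x) A).toReal - (μ A).toReal| ≤ κ * ρ ^ k)
    (X : 𝒳 → EuclideanSpace ℝ (Fin d × Fin d)) (Cx : ℝ) (hX : Measurable X)
    (hbd : ∀ x, ‖X x‖ ≤ Cx)
    {Ω : Type*} [MeasurableSpace Ω] (Pr : Measure Ω) [IsProbabilityMeasure Pr]
    (x : ℕ → Ω → 𝒳) (hx : ∀ i, Measurable (x i))
    (hMarkov : ∀ (i k : ℕ) (A B : Set 𝒳), MeasurableSet A → MeasurableSet B →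
      Pr {ω | x i ω ∈ A ∧ x (i + k) ω ∈ B} =
        ∫⁻ s in A, (kpow P k s) B ∂(Pr.map (x i)))
    (t₀ M : ℕ) (hM : 0 < M) :
    ∫ ω, ‖(M : ℝ)⁻¹ • ∑ i ∈ Finset.range M, X (x (t₀ + i) ω) - ∫ s, X s ∂μ‖ ^ 2 ∂Pr ≤
      8 * Cx ^ 2 * (1 + (κ - 1) * ρ) / ((1 - ρ) * M) := by
  obtain ⟨hρ₀, hρ₁⟩ := hρ
  obtain ⟨ω₀⟩ := nonempty_of_isProbabilityMeasure Pr
  have hCx : 0 ≤ Cx := (norm_nonneg _).trans (hbd (x 0 ω₀))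
  set Xμ := ∫ s, X s ∂μ
  set f : ℕ → Ω → EuclideanSpace ℝ (Fin d × Fin d) := fun i ω => X (x (t₀ + i) ω)
  have hf : ∀ i, Measurable fun ω => f i ω - Xμ := fun i => (hX.comp (hx _)).sub measurable_const
  have hfC : ∀ i ω, ‖f i ω - Xμ‖ ≤ 2 * Cx := fun i ω => norm_sub_integral_le hbd _
  have hdiag : ∀ i, ∫ ω, ⟪f i ω - Xμ, f i ω - Xμ⟫ ∂Pr ≤ 2 * Cx * (2 * Cx) := fun i =>
    integral_le_of_forall_norm_le fun ω =>
      norm_inner_le_of_norm_le (by positivity) (hfC i ω) (hfC i ω)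
  have hoff : ∀ i j, i < j →
      ∫ ω, ⟪f i ω - Xμ, f j ω - Xμ⟫ ∂Pr ≤ 2 * Cx * (2 * Cx * κ) * ρ ^ (j - i) := fun i j hij => by
    have := integral_inner_sub_integral_le_of_mixing hmix hX.stronglyMeasurable hCx hbd hx
      hMarkov (Nat.add_le_add_left hij.le t₀)
    rw [Nat.add_sub_add_left] at this
    exact this.trans_eq (by ring)
  have hsum := sum_range_sum_range_le_of_geometric_decay (by positivity) hρ₀.le hρ₁
    (fun i j => integral_congr_ae (.of_forall fun ω => real_inner_comm _ _)) hdiag hoff M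
  have h1ρ : 0 < 1 - ρ := sub_pos.2 hρ₁
  rw [integral_norm_average_sub_sq hM.ne' Xμ fun i j =>
    integrable_inner_of_norm_le (hf i).aestronglyMeasurable (hf j).aestronglyMeasurable
      (by positivity) (hfC i) (hfC j)]
  calc (M : ℝ)⁻¹ ^ 2 * ∑ i ∈ range M, ∑ j ∈ range M, ∫ ω, ⟪f i ω - Xμ, f j ω - Xμ⟫ ∂Pr
      ≤ (M : ℝ)⁻¹ ^ 2 * (M * (2 * Cx * (2 * Cx) + 2 * (2 * Cx * (2 * Cx * κ)) * (ρ / (1 - ρ)))) :=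
        by gcongr
    _ = 4 * Cx ^ 2 * (1 + (2 * κ - 1) * ρ) / ((1 - ρ) * M) := by
        field_simp
        ring
    _ ≤ 8 * Cx ^ 2 * (1 + (κ - 1) * ρ) / ((1 - ρ) * M) :=
        div_le_div_of_nonneg_right (by nlinarith [sq_nonneg Cx]) (by positivity)

/-- Second-moment bound for a Markovian mini-batch average of a bounded
(matrix-valued, Frobenius norm) function under uniform geometric mixing. -/
theorem markov_minibatch_variance {𝒳 : Type*} [MeasurableSpace 𝒳] {d : ℕ}
    (P : Kernel 𝒳 𝒳) [IsMarkovKernel P] (μ : Measure 𝒳) [IsProbabilityMeasure μ]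
    (hstat : μ.bind (fun s => P s) = μ)
    (κ ρ : ℝ) (hκ : 0 < κ) (hρ : ρ ∈ Set.Ioo (0 : ℝ) 1)
    (hmix : ∀ (x : 𝒳) (k : ℕ) (A : Set 𝒳), MeasurableSet A →
      |((kpow P k x) A).toReal - (μ A).toReal| ≤ κ * ρ ^ k)
    (X : 𝒳 → EuclideanSpace ℝ (Fin d × Fin d)) (Cx : ℝ) (hX : Measurable X)
    (hbd : ∀ x, ‖X x‖ ≤ Cx)
    {Ω : Type*} [MeasurableSpace Ω] (Pr : Measure Ω) [IsProbabilityMeasure Pr]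
    (x : ℕ → Ω → 𝒳) (hx : ∀ i, Measurable (x i))
    (hMarkov : ∀ (i k : ℕ) (A B : Set 𝒳), MeasurableSet A → MeasurableSet B →
      Pr {ω | x i ω ∈ A ∧ x (i + k) ω ∈ B} =
        ∫⁻ s in A, (kpow P k s) B ∂(Pr.map (x i)))
    (t₀ M : ℕ) (hM : 0 < M) :
    ∫ ω, ‖(M : ℝ)⁻¹ • ∑ i ∈ Finset.range M, X (x (t₀ + i) ω) - ∫ s, X s ∂μ‖ ^ 2 ∂Pr ≤
      8 * Cx ^ 2 * (1 + (κ - 1) * ρ) / ((1 - ρ) * M) :=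
  markov_minibatch_variance_general P μ κ ρ hκ hρ hmix X Cx hX hbd Pr x hx hMarkov t₀ M hM
end

section
/- Let J : ℝ^d → ℝ be defined as J(w) = ∫ Q_w(x) ψ_w(x) ν_w(dx) (vector-valued integrand interpreted componentwise for the gradient ∇J), where for all w, w' and all x: |Q_w(x)| ≤ Q_max, ‖ψ_w(x)‖ ≤ C_ψ, |Q_w(x) − Q_{w'}(x)| ≤ L_Q‖w−w'‖, ‖ψ_w(x) − ψ_{w'}(x)‖ ≤ L_ψ‖w−w'‖, and ∫|ν_w(dx) − ν_{w'}(dx)| ≤ 2C_ν‖w−w'‖. Then ‖∇J(w) − ∇J(w')‖ ≤ (2Q_max C_ν C_ψ + L_Q C_ψ + Q_max L_ψ)‖w−w'‖. -/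
open MeasureTheory

/-- Bounded measurable functions are integrable w.r.t. finite measures. -/
lemma integrable_of_bdd {𝒳 : Type*} [MeasurableSpace 𝒳] {dψ : ℕ}
    (m : Measure 𝒳) [IsFiniteMeasure m] (f : 𝒳 → EuclideanSpace ℝ (Fin dψ))
    (hf : Measurable f) (M : ℝ) (hbd : ∀ x, ‖f x‖ ≤ M) : Integrable f m :=
  (integrable_const M).mono' hf.aestronglyMeasurable (Filter.Eventually.of_forall hbd)

/-- Total-variation bound: if `|μ A - μ' A| ≤ ε` for all measurable `A` and `‖f‖ ≤ M`,
then `‖∫ f dμ - ∫ f dμ'‖ ≤ 2 M ε`. -/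
lemma tv_integral_bound {𝒳 : Type*} [MeasurableSpace 𝒳] {dψ : ℕ}
    (μ μ' : Measure 𝒳) [IsFiniteMeasure μ] [IsFiniteMeasure μ']
    (f : 𝒳 → EuclideanSpace ℝ (Fin dψ)) (hf : Measurable f)
    (M ε : ℝ) (hM : 0 ≤ M) (hbd : ∀ x, ‖f x‖ ≤ M)
    (hε : ∀ A : Set 𝒳, MeasurableSet A → |(μ A).toReal - (μ' A).toReal| ≤ ε) :
    ‖(∫ x, f x ∂μ) - ∫ x, f x ∂μ'‖ ≤ 2 * (M * ε) := by
  obtain ⟨s, hs, h1, h2⟩ := hahn_decomposition (μ := μ) (ν := μ')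
  -- on `s`, `μ' ≤ μ`; on `sᶜ`, `μ ≤ μ'`
  have hle : μ'.restrict s ≤ μ.restrict s := by
    refine Measure.le_iff.2 fun t ht => ?_
    rw [Measure.restrict_apply ht, Measure.restrict_apply ht]
    exact h1 _ (ht.inter hs) Set.inter_subset_right
  have hle' : μ.restrict sᶜ ≤ μ'.restrict sᶜ := by
    refine Measure.le_iff.2 fun t ht => ?_
    rw [Measure.restrict_apply ht, Measure.restrict_apply ht]
    exact h2 _ (ht.inter hs.compl) Set.inter_subset_right
  set ρ : Measure 𝒳 := μ.restrict s - μ'.restrict s with hρ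
  set ρ' : Measure 𝒳 := μ'.restrict sᶜ - μ.restrict sᶜ with hρ'
  haveI : IsFiniteMeasure ρ :=
    isFiniteMeasure_of_le (μ.restrict s) (Measure.sub_le)
  haveI : IsFiniteMeasure ρ' :=
    isFiniteMeasure_of_le (μ'.restrict sᶜ) (Measure.sub_le)
  have hintμ : Integrable f μ := integrable_of_bdd μ f hf M hbd
  have hintμ' : Integrable f μ' := integrable_of_bdd μ' f hf M hbd
  have hintρ : Integrable f ρ := integrable_of_bdd ρ f hf M hbd
  have hintρ' : Integrable f ρ' := integrable_of_bdd ρ' f hf M hbd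
  have hrec : μ.restrict s = ρ + μ'.restrict s := (Measure.sub_add_cancel_of_le hle).symm
  have hrec' : μ'.restrict sᶜ = ρ' + μ.restrict sᶜ := (Measure.sub_add_cancel_of_le hle').symm
  have hs_int : ∫ x in s, f x ∂μ = (∫ x, f x ∂ρ) + ∫ x in s, f x ∂μ' := by
    rw [hrec, integral_add_measure hintρ (hintμ'.restrict)]
  have hsc_int : ∫ x in sᶜ, f x ∂μ' = (∫ x, f x ∂ρ') + ∫ x in sᶜ, f x ∂μ := by
    rw [hrec', integral_add_measure hintρ' (hintμ.restrict)]
  have hsplit : (∫ x, f x ∂μ) - ∫ x, f x ∂μ' = (∫ x, f x ∂ρ) - ∫ x, f x ∂ρ' := by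
    rw [← integral_add_compl hs hintμ, ← integral_add_compl hs hintμ', hs_int, hsc_int]
    abel
  rw [hsplit]
  have bnd : ∀ (m : Measure 𝒳), IsFiniteMeasure m → (m Set.univ).toReal ≤ ε →
      ‖∫ x, f x ∂m‖ ≤ M * ε := by
    intro m hm hmε
    haveI := hm
    calc ‖∫ x, f x ∂m‖ ≤ M * (m Set.univ).toReal :=
          norm_integral_le_of_norm_le_const (Filter.Eventually.of_forall hbd)
      _ ≤ M * ε := by exact mul_le_mul_of_nonneg_left hmε hM
  have hρu : (ρ Set.univ).toReal ≤ ε := by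
    have h0 : ρ Set.univ = μ s - μ' s := by
      rw [hρ, Measure.sub_apply MeasurableSet.univ hle, Measure.restrict_apply_univ,
        Measure.restrict_apply_univ]
    rw [h0, ENNReal.toReal_sub_of_le (h1 s hs Set.Subset.rfl) (measure_ne_top μ s)]
    exact (le_abs_self _).trans (hε s hs)
  have hρ'u : (ρ' Set.univ).toReal ≤ ε := by
    have h0 : ρ' Set.univ = μ' sᶜ - μ sᶜ := by
      rw [hρ', Measure.sub_apply MeasurableSet.univ hle', Measure.restrict_apply_univ,
        Measure.restrict_apply_univ]
    rw [h0, ENNReal.toReal_sub_of_le (h2 sᶜ hs.compl Set.Subset.rfl) (measure_ne_top μ' sᶜ)]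
    have := hε sᶜ hs.compl
    rw [abs_sub_comm] at this
    exact (le_abs_self _).trans this
  calc ‖(∫ x, f x ∂ρ) - ∫ x, f x ∂ρ'‖ ≤ ‖∫ x, f x ∂ρ‖ + ‖∫ x, f x ∂ρ'‖ := norm_sub_le _ _
    _ ≤ M * ε + M * ε := add_le_add (bnd ρ ‹_› hρu) (bnd ρ' ‹_› hρ'u)
    _ = 2 * (M * ε) := by ring

/-- Abstract form of Proposition 1 (smoothness of the policy gradient):
`∇J(w) = ∫ Q_w(x) ψ_w(x) ν_w(dx)` is Lipschitz in `w` when `Q`, `ψ` are bounded and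
Lipschitz and the visitation measures satisfy `∫|ν_w - ν_{w'}| ≤ 2 C_ν ‖w - w'‖`
(stated equivalently as `sup_A |ν_w A - ν_{w'} A| ≤ C_ν ‖w - w'‖`). -/
theorem policy_gradient_lipschitz {𝒳 : Type*} [MeasurableSpace 𝒳] {dw dψ : ℕ}
    (ν : EuclideanSpace ℝ (Fin dw) → Measure 𝒳)
    (hprob : ∀ w, IsProbabilityMeasure (ν w))
    (Q : EuclideanSpace ℝ (Fin dw) → 𝒳 → ℝ)
    (ψ : EuclideanSpace ℝ (Fin dw) → 𝒳 → EuclideanSpace ℝ (Fin dψ))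
    (Qmax Cψ LQ Lψ Cν : ℝ)
    (hQmeas : ∀ w, Measurable (Q w)) (hψmeas : ∀ w, Measurable (ψ w))
    (hQbd : ∀ w x, |Q w x| ≤ Qmax)
    (hψbd : ∀ w x, ‖ψ w x‖ ≤ Cψ)
    (hQlip : ∀ w w' x, |Q w x - Q w' x| ≤ LQ * ‖w - w'‖)
    (hψlip : ∀ w w' x, ‖ψ w x - ψ w' x‖ ≤ Lψ * ‖w - w'‖)
    (hνlip : ∀ w w' (A : Set 𝒳), MeasurableSet A →
      |(ν w A).toReal - (ν w' A).toReal| ≤ Cν * ‖w - w'‖)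
    (w w' : EuclideanSpace ℝ (Fin dw)) :
    ‖(∫ x, Q w x • ψ w x ∂(ν w)) - ∫ x, Q w' x • ψ w' x ∂(ν w')‖ ≤
      (2 * Qmax * Cν * Cψ + LQ * Cψ + Qmax * Lψ) * ‖w - w'‖ := by
  haveI := hprob w
  haveI := hprob w'
  -- 𝒳 is nonempty since it carries a probability measure
  have hX : Nonempty 𝒳 := by
    by_contra h
    have : (Set.univ : Set 𝒳) = ∅ := Set.univ_eq_empty_iff.2 (not_nonempty_iff.1 h)
    have h1 : ν w Set.univ = 1 := measure_univ
    rw [this, measure_empty] at h1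
    exact zero_ne_one h1
  obtain ⟨x₀⟩ := hX
  have hQmax0 : 0 ≤ Qmax := (abs_nonneg _).trans (hQbd w x₀)
  have hCψ0 : 0 ≤ Cψ := (norm_nonneg _).trans (hψbd w x₀)
  set δ := ‖w - w'‖ with hδ
  have hδ0 : 0 ≤ δ := norm_nonneg _
  set f : 𝒳 → EuclideanSpace ℝ (Fin dψ) := fun x => Q w x • ψ w x with hf
  set g : 𝒳 → EuclideanSpace ℝ (Fin dψ) := fun x => Q w' x • ψ w' x with hg
  have hfmeas : Measurable f := (hQmeas w).smul (hψmeas w)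
  have hgmeas : Measurable g := (hQmeas w').smul (hψmeas w')
  have hfbd : ∀ x, ‖f x‖ ≤ Qmax * Cψ := fun x => by
    rw [hf, norm_smul]
    exact mul_le_mul (hQbd w x) (hψbd w x) (norm_nonneg _) hQmax0
  -- term 1: change the measure
  have T1 : ‖(∫ x, f x ∂(ν w)) - ∫ x, f x ∂(ν w')‖ ≤ 2 * (Qmax * Cψ * (Cν * δ)) :=
    tv_integral_bound (ν w) (ν w') f hfmeas (Qmax * Cψ) (Cν * δ)
      (mul_nonneg hQmax0 hCψ0) hfbd (fun A hA => hνlip w w' A hA)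
  -- term 2: change the integrand
  have hptw : ∀ x, ‖f x - g x‖ ≤ LQ * Cψ * δ + Qmax * Lψ * δ := by
    intro x
    have key : f x - g x = (Q w x - Q w' x) • ψ w x + Q w' x • (ψ w x - ψ w' x) := by
      rw [hf, hg]
      simp [sub_smul, smul_sub]
    calc ‖f x - g x‖ = ‖(Q w x - Q w' x) • ψ w x + Q w' x • (ψ w x - ψ w' x)‖ := by rw [key]
      _ ≤ ‖(Q w x - Q w' x) • ψ w x‖ + ‖Q w' x • (ψ w x - ψ w' x)‖ := norm_add_le _ _
      _ ≤ (LQ * δ) * Cψ + Qmax * (Lψ * δ) := by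
          rw [norm_smul, norm_smul, Real.norm_eq_abs, Real.norm_eq_abs]
          exact add_le_add
            (mul_le_mul (hQlip w w' x) (hψbd w x) (norm_nonneg _)
              ((abs_nonneg _).trans (hQlip w w' x)))
            (mul_le_mul (hQbd w' x) (hψlip w w' x) (norm_nonneg _) hQmax0)
      _ = LQ * Cψ * δ + Qmax * Lψ * δ := by ring
  have hintf : Integrable f (ν w') := integrable_of_bdd _ f hfmeas (Qmax * Cψ) hfbd
  have hintg : Integrable g (ν w') := integrable_of_bdd _ g hgmeas (Qmax * Cψ) (fun x => by
    rw [hg, norm_smul]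
    exact mul_le_mul (hQbd w' x) (hψbd w' x) (norm_nonneg _) hQmax0)
  have T2 : ‖(∫ x, f x ∂(ν w')) - ∫ x, g x ∂(ν w')‖ ≤ LQ * Cψ * δ + Qmax * Lψ * δ := by
    rw [← integral_sub hintf hintg]
    calc ‖∫ x, (f x - g x) ∂(ν w')‖
        ≤ (LQ * Cψ * δ + Qmax * Lψ * δ) * ((ν w') Set.univ).toReal :=
          norm_integral_le_of_norm_le_const (Filter.Eventually.of_forall hptw)
      _ = LQ * Cψ * δ + Qmax * Lψ * δ := by
          simp [measure_univ]
  calc ‖(∫ x, f x ∂(ν w)) - ∫ x, g x ∂(ν w')‖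
      = ‖((∫ x, f x ∂(ν w)) - ∫ x, f x ∂(ν w')) + ((∫ x, f x ∂(ν w')) - ∫ x, g x ∂(ν w'))‖ := by
        congr 1; abel
    _ ≤ ‖(∫ x, f x ∂(ν w)) - ∫ x, f x ∂(ν w')‖ + ‖(∫ x, f x ∂(ν w')) - ∫ x, g x ∂(ν w')‖ :=
        norm_add_le _ _
    _ ≤ 2 * (Qmax * Cψ * (Cν * δ)) + (LQ * Cψ * δ + Qmax * Lψ * δ) := add_le_add T1 T2
    _ = (2 * Qmax * Cν * Cψ + LQ * Cψ + Qmax * Lψ) * δ := by ring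
end
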